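/- Let n ≥ 4, let C be a totally traceless generalized curvature tensor on Minkowski space ℝ^n, and let u be a unit timelike vector such that C is Weyl compatible with u. Then the Weyl scalar is nonnegative: C² = 4·((n−2)/(n−3))·E² + Γ² ≥ 0, where E is the electric part of C relative to u and Γ is the associated tensor built from C, E, u and η. -/

import Mathlib

open Finset

noncomputable section

/-- A 4-argument real tensor on `ℝ^n`. -/
abbrev Tensor4 (n : ℕ) :=
  (Fin n → ℝ) → (Fin n → ℝ) → (Fin n → ℝ) → (Fin n → ℝ) → ℝ

/-- Components of the Minkowski metric `diag(-1,1,…,1)` of signature `(-,+,…,+)`.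
Since this matrix is its own inverse, it also gives the components `η^{ab}`
of the inverse metric. -/
def ηm {n : ℕ} (a b : Fin n) : ℝ :=
  if a = b then (if (a : ℕ) = 0 then -1 else 1) else 0

/-- The Minkowski bilinear form `η` of signature `(-,+,…,+)` on `ℝ^n`. -/
def ηf {n : ℕ} (x y : Fin n → ℝ) : ℝ :=
  ∑ i : Fin n, (if (i : ℕ) = 0 then (-1 : ℝ) else 1) * x i * y i

/-- The standard basis `(e_a)` of `ℝ^n`. -/
def stdb {n : ℕ} (a : Fin n) : Fin n → ℝ := fun i => if i = a then 1 else 0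

/-- Multilinearity of a 4-argument map. -/
def Multilinear4 {n : ℕ} (C : Tensor4 n) : Prop :=
  (∀ y z w, IsLinearMap ℝ fun x => C x y z w) ∧
  (∀ x z w, IsLinearMap ℝ fun y => C x y z w) ∧
  (∀ x y w, IsLinearMap ℝ fun z => C x y z w) ∧
  (∀ x y z, IsLinearMap ℝ fun w => C x y z w)

/-- Bilinearity of a 2-argument map. -/
def Bilinear2 {n : ℕ} (S : (Fin n → ℝ) → (Fin n → ℝ) → ℝ) : Prop :=
  (∀ y, IsLinearMap ℝ fun x => S x y) ∧ (∀ x, IsLinearMap ℝ fun y => S x y)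

/-- A generalized curvature tensor: a multilinear map with the algebraic
symmetries of the Riemann tensor (antisymmetry in the first and the last pair,
pair-exchange symmetry, and the first Bianchi identity). -/
def IsGenCurv {n : ℕ} (C : Tensor4 n) : Prop :=
  Multilinear4 C ∧
  (∀ x y z w, C x y z w = - C y x z w) ∧
  (∀ x y z w, C x y z w = - C x y w z) ∧
  (∀ x y z w, C x y z w = C z w x y) ∧
  (∀ x y z w, C x y z w + C y z x w + C z x y w = 0)

/-- Total tracelessness: `Σ_{a,b} η^{ab} C(e_a, x, e_b, y) = 0`. -/
def TotallyTraceless {n : ℕ} (C : Tensor4 n) : Prop :=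
  ∀ x y, (∑ a, ∑ b, ηm a b * C (stdb a) x (stdb b) y) = 0

/-- Weyl compatibility of `C` with the vector `u`. -/
def WeylCompatible {n : ℕ} (C : Tensor4 n) (u : Fin n → ℝ) : Prop :=
  ∀ x y z w,
    ηf u x * C y z w u + ηf u y * C z x w u + ηf u z * C x y w u = 0

/-- The electric part of `C` relative to `u`: `E(x,y) = C(u,x,y,u)`. -/
def electric {n : ℕ} (C : Tensor4 n) (u : Fin n → ℝ)
    (x y : Fin n → ℝ) : ℝ :=
  C u x y u

/-- Full η-self-contraction `T² = Σ T_{abcd} T^{abcd}` of a 4-tensor. -/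
def sq4 {n : ℕ} (T : Tensor4 n) : ℝ :=
  ∑ a, ∑ a', ∑ b, ∑ b', ∑ c, ∑ c', ∑ d, ∑ d',
    ηm a a' * ηm b b' * ηm c c' * ηm d d' *
      T (stdb a) (stdb b) (stdb c) (stdb d) *
      T (stdb a') (stdb b') (stdb c') (stdb d')

/-- Full η-self-contraction `S² = Σ S_{ab} S^{ab}` of a 2-tensor. -/
def sq2 {n : ℕ} (S : (Fin n → ℝ) → (Fin n → ℝ) → ℝ) : ℝ :=
  ∑ a, ∑ a', ∑ b, ∑ b',
    ηm a a' * ηm b b' * S (stdb a) (stdb b) * S (stdb a') (stdb b')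

/-- The tensor `Γ` associated with `C`, its electric part `E`, `u` and `η`. -/
def Γt {n : ℕ} (C : Tensor4 n) (u : Fin n → ℝ) : Tensor4 n :=
  fun x y z w =>
    C x y z w
      - ((n : ℝ) - 2) / ((n : ℝ) - 3) *
          (ηf u x * ηf u w * electric C u y z - ηf u y * ηf u w * electric C u x z
            - ηf u x * ηf u z * electric C u y w + ηf u y * ηf u z * electric C u x w)
      - 1 / ((n : ℝ) - 3) *
          (ηf x w * electric C u y z - ηf y w * electric C u x z
            - ηf x z * electric C u y w + ηf y z * electric C u x w)

-- infrastructure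
def gsgn {n : ℕ} (a : Fin n) : ℝ := if (a : ℕ) = 0 then -1 else 1

lemma gsgn_sq {n : ℕ} (a : Fin n) : gsgn a * gsgn a = 1 := by
  unfold gsgn; split <;> norm_num

lemma ηm_eq {n : ℕ} (a b : Fin n) : ηm a b = if a = b then gsgn a else 0 := rfl

lemma ηm_comm {n : ℕ} (a b : Fin n) : ηm a b = ηm b a := by
  unfold ηm
  rcases eq_or_ne a b with h | h
  · subst h; rfl
  · simp [h, h.symm]

lemma collapse {n : ℕ} (a : Fin n) (F : Fin n → ℝ) :
    ∑ x, ηm a x * F x = gsgn a * F a := by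
  simp [ηm_eq, ite_mul, zero_mul, Finset.sum_ite_eq]

lemma collapse' {n : ℕ} (a : Fin n) (F : Fin n → ℝ) :
    ∑ x, ηm x a * F x = gsgn a * F a := by
  rw [show (∑ x, ηm x a * F x) = ∑ x, ηm a x * F x from
    Finset.sum_congr rfl fun x _ => by rw [ηm_comm]]
  exact collapse a F

lemma ηf_eq {n : ℕ} (x y : Fin n → ℝ) : ηf x y = ∑ i, gsgn i * x i * y i := rfl

lemma ηf_comm {n : ℕ} (x y : Fin n → ℝ) : ηf x y = ηf y x := by
  simp only [ηf_eq]; exact Finset.sum_congr rfl fun i _ => by ring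

lemma ηf_stdb_right {n : ℕ} (u : Fin n → ℝ) (a : Fin n) :
    ηf u (stdb a) = gsgn a * u a := by
  simp [ηf_eq, stdb, mul_ite, mul_one, mul_zero, Finset.sum_ite_eq']

lemma ηf_stdb_stdb {n : ℕ} (a b : Fin n) : ηf (stdb a) (stdb b) = ηm a b := by
  simp only [ηf_eq, stdb, ηm_eq, gsgn]
  rcases eq_or_ne a b with h | h
  · subst h
    simp [mul_ite, ite_mul, mul_one, mul_zero, one_mul, zero_mul, Finset.sum_ite_eq']
  · simp only [if_neg h]
    apply Finset.sum_eq_zero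
    intro i _
    rcases eq_or_ne i a with h2 | h2
    · subst h2; simp [Ne.symm, h]
    · simp [h2]

lemma sum_smul_stdb {n : ℕ} (x : Fin n → ℝ) : ∑ a, x a • stdb a = x := by
  funext i
  simp [stdb, Finset.sum_apply, mul_ite, mul_one, mul_zero, Finset.sum_ite_eq]

lemma lin_comb {n : ℕ} {f : (Fin n → ℝ) → ℝ} (hf : IsLinearMap ℝ f) (x : Fin n → ℝ) :
    ∑ a, x a * f (stdb a) = f x := by
  have h1 : ∀ a : Fin n, x a * f (stdb a) = f (x a • stdb a) := fun a => by
    rw [hf.map_smul]; rfl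
  calc ∑ a, x a * f (stdb a) = ∑ a, (IsLinearMap.mk' f hf) (x a • stdb a) := by
        simp only [h1]; rfl
    _ = (IsLinearMap.mk' f hf) (∑ a, x a • stdb a) := (map_sum _ _ _).symm
    _ = f x := by rw [sum_smul_stdb]; rfl


/- ## Components -/

def cc {n : ℕ} (C : Tensor4 n) (a b c d : Fin n) : ℝ :=
  C (stdb a) (stdb b) (stdb c) (stdb d)

def ee {n : ℕ} (C : Tensor4 n) (u : Fin n → ℝ) (a b : Fin n) : ℝ :=
  C u (stdb a) (stdb b) u

def vl {n : ℕ} (u : Fin n → ℝ) (a : Fin n) : ℝ := gsgn a * u a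

lemma gv {n : ℕ} (u : Fin n → ℝ) (a : Fin n) : gsgn a * vl u a = u a := by
  rw [vl, ← mul_assoc, gsgn_sq, one_mul]

section CurvBasics

variable {n : ℕ} {C : Tensor4 n} {u : Fin n → ℝ}

lemma sumC1 (hml : Multilinear4 C) (x y z w : Fin n → ℝ) :
    ∑ a, x a * C (stdb a) y z w = C x y z w := lin_comb (hml.1 y z w) x

lemma sumC2 (hml : Multilinear4 C) (x y z w : Fin n → ℝ) :
    ∑ a, y a * C x (stdb a) z w = C x y z w := lin_comb (hml.2.1 x z w) y

lemma sumC3 (hml : Multilinear4 C) (x y z w : Fin n → ℝ) :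
    ∑ a, z a * C x y (stdb a) w = C x y z w := lin_comb (hml.2.2.1 x y w) z

lemma sumC4 (hml : Multilinear4 C) (x y z w : Fin n → ℝ) :
    ∑ a, w a * C x y z (stdb a) = C x y z w := lin_comb (hml.2.2.2 x y z) w

lemma ee_symm (hC : IsGenCurv C) (a b : Fin n) : ee C u a b = ee C u b a := by
  unfold ee
  rw [hC.2.2.2.1 u (stdb a) (stdb b) u, hC.2.1, hC.2.2.1]
  ring_nf

lemma sum_u_ee_l (hC : IsGenCurv C) (b : Fin n) :
    ∑ a, u a * ee C u a b = 0 := by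
  unfold ee
  rw [sumC2 hC.1 u u (stdb b) u]
  have := hC.2.1 u u (stdb b) u
  linarith

lemma sum_u_ee_r (hC : IsGenCurv C) (a : Fin n) :
    ∑ b, u b * ee C u a b = 0 := by
  unfold ee
  rw [sumC3 hC.1 u (stdb a) u u]
  have := hC.2.2.1 u (stdb a) u u
  linarith

lemma trc (htr : TotallyTraceless C) (x y : Fin n → ℝ) :
    ∑ a, gsgn a * C (stdb a) x (stdb a) y = 0 := by
  have h := htr x y
  calc ∑ a, gsgn a * C (stdb a) x (stdb a) y
      = ∑ a, ∑ b, ηm a b * C (stdb a) x (stdb b) y := by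
        refine Finset.sum_congr rfl fun a _ => ?_
        rw [collapse a (fun b => C (stdb a) x (stdb b) y)]
    _ = 0 := h

lemma tr_ee (hC : IsGenCurv C) (htr : TotallyTraceless C) :
    ∑ a, gsgn a * ee C u a a = 0 := by
  have h := trc (C := C) htr u u
  calc ∑ a, gsgn a * ee C u a a
      = ∑ a, -(gsgn a * C (stdb a) u (stdb a) u) := by
        refine Finset.sum_congr rfl fun a _ => ?_
        rw [ee, hC.2.1 u (stdb a) (stdb a) u]; ring
    _ = 0 := by rw [Finset.sum_neg_distrib, h, neg_zero]

lemma ee_from_cc (hml : Multilinear4 C) (b c : Fin n) :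
    ∑ a, ∑ d, u a * u d * cc C a b c d = ee C u b c := by
  have h1 : ∀ a : Fin n, ∑ d, u a * u d * cc C a b c d
      = u a * C (stdb a) (stdb b) (stdb c) u := by
    intro a
    rw [← sumC4 hml (stdb a) (stdb b) (stdb c) u, Finset.mul_sum]
    exact Finset.sum_congr rfl fun d _ => by rw [cc]; ring
  rw [Finset.sum_congr rfl fun a _ => h1 a]
  exact sumC1 hml u (stdb b) (stdb c) u

lemma ee_from_cc2 (hC : IsGenCurv C) (a c : Fin n) :
    ∑ b, ∑ d, u b * u d * cc C a b c d = - ee C u a c := by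
  have h1 : ∀ b : Fin n, ∑ d, u b * u d * cc C a b c d
      = u b * C (stdb a) (stdb b) (stdb c) u := by
    intro b
    rw [← sumC4 hC.1 (stdb a) (stdb b) (stdb c) u, Finset.mul_sum]
    exact Finset.sum_congr rfl fun d _ => by rw [cc]; ring
  rw [Finset.sum_congr rfl fun b _ => h1 b, sumC2 hC.1 (stdb a) u (stdb c) u]
  rw [ee, hC.2.1 (stdb a) u (stdb c) u]

lemma ee_from_cc3 (hC : IsGenCurv C) (b d : Fin n) :
    ∑ a, ∑ c, u a * u c * cc C a b c d = - ee C u b d := by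
  have h1 : ∀ a : Fin n, ∑ c, u a * u c * cc C a b c d
      = u a * C (stdb a) (stdb b) u (stdb d) := by
    intro a
    rw [← sumC3 hC.1 (stdb a) (stdb b) u (stdb d), Finset.mul_sum]
    exact Finset.sum_congr rfl fun c _ => by rw [cc]; ring
  rw [Finset.sum_congr rfl fun a _ => h1 a, sumC1 hC.1 u (stdb b) u (stdb d)]
  rw [ee, hC.2.2.1 u (stdb b) u (stdb d)]

lemma ee_from_cc4 (hC : IsGenCurv C) (a d : Fin n) :
    ∑ b, ∑ c, u b * u c * cc C a b c d = ee C u a d := by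
  have h1 : ∀ b : Fin n, ∑ c, u b * u c * cc C a b c d
      = u b * C (stdb a) (stdb b) u (stdb d) := by
    intro b
    rw [← sumC3 hC.1 (stdb a) (stdb b) u (stdb d), Finset.mul_sum]
    exact Finset.sum_congr rfl fun c _ => by rw [cc]; ring
  rw [Finset.sum_congr rfl fun b _ => h1 b, sumC2 hC.1 (stdb a) u u (stdb d)]
  rw [ee, hC.2.1 (stdb a) u u (stdb d), hC.2.2.1 u (stdb a) u (stdb d)]
  ring_nf

lemma cwu (hC : IsGenCurv C) (hu : ηf u u = -1) (hW : WeylCompatible C u)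
    (x y w : Fin n → ℝ) :
    C x y w u = ηf u y * C u x w u - ηf u x * C u y w u := by
  have h := hW x y u w
  rw [hu] at h
  have h2 := hC.2.1 y u w u
  linear_combination -h + ηf u x * h2

end CurvBasics

/- ## Gamma components -/

def KK (n : ℕ) : ℝ := ((n : ℝ) - 2) / ((n : ℝ) - 3)
def mmc (n : ℕ) : ℝ := 1 / ((n : ℝ) - 3)

def DD {n : ℕ} (C : Tensor4 n) (u : Fin n → ℝ) (a b c d : Fin n) : ℝ :=
  KK n * (vl u a * vl u d * ee C u b c - vl u b * vl u d * ee C u a c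
      - vl u a * vl u c * ee C u b d + vl u b * vl u c * ee C u a d)
    + mmc n * (ηm a d * ee C u b c - ηm b d * ee C u a c
      - ηm a c * ee C u b d + ηm b c * ee C u a d)

def gg4 {n : ℕ} (C : Tensor4 n) (u : Fin n → ℝ) (a b c d : Fin n) : ℝ :=
  Γt C u (stdb a) (stdb b) (stdb c) (stdb d)

lemma gg4_eq {n : ℕ} (C : Tensor4 n) (u : Fin n → ℝ) (a b c d : Fin n) :
    gg4 C u a b c d = cc C a b c d - DD C u a b c d := by
  unfold gg4 Γt DD KK mmc cc vl ee electric
  simp only [ηf_stdb_stdb]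
  simp only [ηf_stdb_right]
  ring

section GammaBasics

variable {n : ℕ} {C : Tensor4 n} {u : Fin n → ℝ}

lemma cc_sym1 (hC : IsGenCurv C) (a b c d : Fin n) :
    cc C a b c d = - cc C b a c d := hC.2.1 _ _ _ _

lemma cc_sym2 (hC : IsGenCurv C) (a b c d : Fin n) :
    cc C a b c d = - cc C a b d c := hC.2.2.1 _ _ _ _

lemma cc_symp (hC : IsGenCurv C) (a b c d : Fin n) :
    cc C a b c d = cc C c d a b := hC.2.2.2.1 _ _ _ _

lemma gg4_sym1 (hC : IsGenCurv C) (a b c d : Fin n) :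
    gg4 C u a b c d = - gg4 C u b a c d := by
  rw [gg4_eq, gg4_eq]; unfold DD
  linear_combination cc_sym1 hC a b c d

lemma gg4_sym2 (hC : IsGenCurv C) (a b c d : Fin n) :
    gg4 C u a b c d = - gg4 C u a b d c := by
  rw [gg4_eq, gg4_eq]; unfold DD
  linear_combination cc_sym2 hC a b c d

lemma gg4_symp (hC : IsGenCurv C) (a b c d : Fin n) :
    gg4 C u a b c d = gg4 C u c d a b := by
  rw [gg4_eq, gg4_eq]; unfold DD
  rw [ee_symm hC d a, ee_symm hC c a, ee_symm hC d b, ee_symm hC c b,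
    ηm_comm c b, ηm_comm d b, ηm_comm c a, ηm_comm d a]
  linear_combination cc_symp hC a b c d

end GammaBasics

/- ## Small contraction evaluations -/

section SmallSums

variable {n : ℕ} {C : Tensor4 n} {u : Fin n → ℝ}

lemma sum_u_vl (hu : ηf u u = -1) : ∑ d, u d * vl u d = -1 := by
  rw [← hu, ηf_eq]
  exact Finset.sum_congr rfl fun d _ => by rw [vl]; ring

lemma sum_g_vl_vl (hu : ηf u u = -1) : ∑ a, gsgn a * (vl u a * vl u a) = -1 := by
  rw [← hu, ηf_eq]
  refine Finset.sum_congr rfl fun a _ => ?_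
  have h := gsgn_sq a
  unfold vl
  linear_combination (u a * u a * gsgn a) * h

lemma sum_u_ηm (a : Fin n) : ∑ d, u d * ηm a d = vl u a := by
  rw [show (∑ d, u d * ηm a d) = ∑ d, ηm a d * u d from
    Finset.sum_congr rfl fun d _ => by ring, collapse a u, vl]

lemma sum_g_ηm (y : Fin n) (F : Fin n → ℝ) :
    ∑ x, gsgn x * (ηm y x * F x) = F y := by
  rw [show (∑ x, gsgn x * (ηm y x * F x)) = ∑ x, ηm y x * (gsgn x * F x) from
    Finset.sum_congr rfl fun x _ => by ring, collapse y (fun x => gsgn x * F x),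
    ← mul_assoc, gsgn_sq, one_mul]

lemma sum_g_ηm' (y : Fin n) (F : Fin n → ℝ) :
    ∑ x, gsgn x * (ηm x y * F x) = F y := by
  rw [show (∑ x, gsgn x * (ηm x y * F x)) = ∑ x, gsgn x * (ηm y x * F x) from
    Finset.sum_congr rfl fun x _ => by rw [ηm_comm]]
  exact sum_g_ηm y F

lemma sum_g_ηm_diag : ∑ a : Fin n, gsgn a * ηm a a = (n : ℝ) := by
  have h : ∀ a : Fin n, gsgn a * ηm a a = 1 := fun a => by
    rw [ηm_eq, if_pos rfl, gsgn_sq]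
  rw [Finset.sum_congr rfl fun a _ => h a]
  simp

lemma sum_gvl_ee_r (hC : IsGenCurv C) (b : Fin n) :
    ∑ a, gsgn a * (vl u a * ee C u b a) = 0 := by
  rw [show (∑ a, gsgn a * (vl u a * ee C u b a)) = ∑ a, u a * ee C u b a from
    Finset.sum_congr rfl fun a _ => by rw [← gv u a]; ring]
  exact sum_u_ee_r hC b

lemma sum_gvl_ee_l (hC : IsGenCurv C) (c : Fin n) :
    ∑ a, gsgn a * (vl u a * ee C u a c) = 0 := by
  rw [show (∑ a, gsgn a * (vl u a * ee C u a c)) = ∑ a, u a * ee C u a c from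
    Finset.sum_congr rfl fun a _ => by rw [← gv u a]; ring]
  exact sum_u_ee_l hC c

lemma hn3 {n : ℕ} (hn : 4 ≤ n) : ((n : ℝ) - 3) ≠ 0 := by
  have : (4 : ℝ) ≤ (n : ℝ) := by exact_mod_cast hn
  linarith

lemma coef1 {n : ℕ} (hn : 4 ≤ n) : 1 - KK n + mmc n = 0 := by
  unfold KK mmc
  field_simp [hn3 hn]
  ring

lemma coef2 {n : ℕ} (hn : 4 ≤ n) : KK n + mmc n * (2 - (n : ℝ)) = 0 := by
  unfold KK mmc
  field_simp [hn3 hn]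
  ring

lemma KK_pos {n : ℕ} (hn : 4 ≤ n) : 0 ≤ KK n := by
  have : (4 : ℝ) ≤ (n : ℝ) := by exact_mod_cast hn
  unfold KK
  apply div_nonneg <;> linarith

end SmallSums

/- ## u-contractions and traces of gamma -/

section GammaContr

variable {n : ℕ} {C : Tensor4 n} {u : Fin n → ℝ}

lemma uγ4 (hC : IsGenCurv C) (hu : ηf u u = -1) (hW : WeylCompatible C u)
    (hn : 4 ≤ n) (a b c : Fin n) :
    ∑ d, u d * gg4 C u a b c d = 0 := by
  have hsplit : ∑ d, u d * gg4 C u a b c d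
      = (∑ d, u d * cc C a b c d)
        - (KK n * (vl u a * ee C u b c * (∑ d, u d * vl u d)
            - vl u b * ee C u a c * (∑ d, u d * vl u d)
            - vl u a * vl u c * (∑ d, u d * ee C u b d)
            + vl u b * vl u c * (∑ d, u d * ee C u a d))
          + mmc n * (ee C u b c * (∑ d, u d * ηm a d)
            - ee C u a c * (∑ d, u d * ηm b d)
            - ηm a c * (∑ d, u d * ee C u b d)
            + ηm b c * (∑ d, u d * ee C u a d))) := by
    simp only [Finset.mul_sum, ← Finset.sum_sub_distrib, ← Finset.sum_add_distrib]
    refine Finset.sum_congr rfl fun d _ => ?_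
    rw [gg4_eq]; unfold DD; ring
  have hc : ∑ d, u d * cc C a b c d
      = vl u b * ee C u a c - vl u a * ee C u b c := by
    unfold cc
    rw [sumC4 hC.1 (stdb a) (stdb b) (stdb c) u,
      cwu hC hu hW (stdb a) (stdb b) (stdb c),
      ηf_stdb_right u b, ηf_stdb_right u a]
    rfl
  rw [hsplit, hc, sum_u_vl hu, sum_u_ee_r hC a, sum_u_ee_r hC b,
    sum_u_ηm a, sum_u_ηm b]
  linear_combination (vl u b * ee C u a c - vl u a * ee C u b c) * coef1 hn

lemma uγ3 (hC : IsGenCurv C) (hu : ηf u u = -1) (hW : WeylCompatible C u)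
    (hn : 4 ≤ n) (a b d : Fin n) :
    ∑ c, u c * gg4 C u a b c d = 0 := by
  rw [Finset.sum_congr rfl fun c _ =>
    (by rw [gg4_sym2 hC]; ring : u c * gg4 C u a b c d = -(u c * gg4 C u a b d c))]
  rw [Finset.sum_neg_distrib, uγ4 hC hu hW hn a b d, neg_zero]

lemma uγ1 (hC : IsGenCurv C) (hu : ηf u u = -1) (hW : WeylCompatible C u)
    (hn : 4 ≤ n) (b c d : Fin n) :
    ∑ a, u a * gg4 C u a b c d = 0 := by
  rw [Finset.sum_congr rfl fun a _ =>
    (by rw [gg4_symp hC] : u a * gg4 C u a b c d = u a * gg4 C u c d a b)]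
  exact uγ3 hC hu hW hn c d b

lemma uγ2 (hC : IsGenCurv C) (hu : ηf u u = -1) (hW : WeylCompatible C u)
    (hn : 4 ≤ n) (a c d : Fin n) :
    ∑ b, u b * gg4 C u a b c d = 0 := by
  rw [Finset.sum_congr rfl fun b _ =>
    (by rw [gg4_sym1 hC]; ring : u b * gg4 C u a b c d = -(u b * gg4 C u b a c d))]
  rw [Finset.sum_neg_distrib, uγ1 hC hu hW hn a c d, neg_zero]

lemma trγ13 (hC : IsGenCurv C) (htr : TotallyTraceless C) (hu : ηf u u = -1)
    (hn : 4 ≤ n) (b c : Fin n) :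
    ∑ a, gsgn a * gg4 C u a b a c = 0 := by
  have hsplit : ∑ a, gsgn a * gg4 C u a b a c
      = (∑ a, gsgn a * cc C a b a c)
        - (KK n * (vl u c * (∑ a, gsgn a * (vl u a * ee C u b a))
            - vl u b * vl u c * (∑ a, gsgn a * ee C u a a)
            - ee C u b c * (∑ a, gsgn a * (vl u a * vl u a))
            + vl u b * (∑ a, gsgn a * (vl u a * ee C u a c)))
          + mmc n * ((∑ a, gsgn a * (ηm a c * ee C u b a))
            - ηm b c * (∑ a, gsgn a * ee C u a a)
            - ee C u b c * (∑ a : Fin n, gsgn a * ηm a a)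
            + (∑ a, gsgn a * (ηm b a * ee C u a c)))) := by
    simp only [Finset.mul_sum, ← Finset.sum_sub_distrib, ← Finset.sum_add_distrib]
    refine Finset.sum_congr rfl fun a _ => ?_
    rw [gg4_eq]; unfold DD; ring
  have hcc : ∑ a, gsgn a * cc C a b a c = 0 := trc htr (stdb b) (stdb c)
  rw [hsplit, hcc, sum_gvl_ee_r hC b, tr_ee hC htr, sum_g_vl_vl hu,
    sum_gvl_ee_l hC c, sum_g_ηm' c (fun a => ee C u b a),
    sum_g_ηm b (fun a => ee C u a c), sum_g_ηm_diag]
  linear_combination (- ee C u b c) * coef2 hn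

lemma trγ14 (hC : IsGenCurv C) (htr : TotallyTraceless C) (hu : ηf u u = -1)
    (hn : 4 ≤ n) (b c : Fin n) :
    ∑ a, gsgn a * gg4 C u a b c a = 0 := by
  rw [Finset.sum_congr rfl fun a _ =>
    (by rw [gg4_sym2 hC]; ring : gsgn a * gg4 C u a b c a = -(gsgn a * gg4 C u a b a c))]
  rw [Finset.sum_neg_distrib, trγ13 hC htr hu hn b c, neg_zero]

lemma trγ24 (hC : IsGenCurv C) (htr : TotallyTraceless C) (hu : ηf u u = -1)
    (hn : 4 ≤ n) (a c : Fin n) :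
    ∑ b, gsgn b * gg4 C u a b c b = 0 := by
  rw [Finset.sum_congr rfl fun b _ =>
    (by rw [gg4_sym1 hC, gg4_sym2 hC b a c b]; ring :
      gsgn b * gg4 C u a b c b = gsgn b * gg4 C u b a b c)]
  exact trγ13 hC htr hu hn a c

lemma trγ23 (hC : IsGenCurv C) (htr : TotallyTraceless C) (hu : ηf u u = -1)
    (hn : 4 ≤ n) (a d : Fin n) :
    ∑ b, gsgn b * gg4 C u a b b d = 0 := by
  rw [Finset.sum_congr rfl fun b _ =>
    (by rw [gg4_sym1 hC]; ring : gsgn b * gg4 C u a b b d = -(gsgn b * gg4 C u b a b d))]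
  rw [Finset.sum_neg_distrib, trγ13 hC htr hu hn a d, neg_zero]

end GammaContr

/- ## Diagonal pairings -/

def ip4 {n : ℕ} (X Y : Fin n → Fin n → Fin n → Fin n → ℝ) : ℝ :=
  ∑ a, ∑ b, ∑ c, ∑ d,
    gsgn a * gsgn b * gsgn c * gsgn d * X a b c d * Y a b c d

def ip2 {n : ℕ} (X Y : Fin n → Fin n → ℝ) : ℝ :=
  ∑ a, ∑ b, gsgn a * gsgn b * X a b * Y a b

lemma sq4_diag {n : ℕ} (T : Tensor4 n) :
    sq4 T = ip4 (fun a b c d => T (stdb a) (stdb b) (stdb c) (stdb d))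
      (fun a b c d => T (stdb a) (stdb b) (stdb c) (stdb d)) := by
  unfold sq4 ip4
  simp only [ηm_eq, ite_mul, zero_mul, mul_ite, mul_zero, Finset.sum_ite_irrel,
    Finset.sum_const_zero, Finset.sum_ite_eq, mem_univ, if_true]

lemma sq2_diag {n : ℕ} (S : (Fin n → ℝ) → (Fin n → ℝ) → ℝ) :
    sq2 S = ip2 (fun a b => S (stdb a) (stdb b)) (fun a b => S (stdb a) (stdb b)) := by
  unfold sq2 ip2
  simp only [ηm_eq, ite_mul, zero_mul, mul_ite, mul_zero, Finset.sum_ite_irrel,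
    Finset.sum_const_zero, Finset.sum_ite_eq, mem_univ, if_true]

lemma ip4_split {n : ℕ} (C : Tensor4 n) (u : Fin n → ℝ) :
    ip4 (cc C) (cc C)
      = ip4 (gg4 C u) (gg4 C u) + 2 * ip4 (gg4 C u) (DD C u)
        + ip4 (DD C u) (DD C u) := by
  unfold ip4
  simp only [Finset.mul_sum, ← Finset.sum_add_distrib]
  refine Finset.sum_congr rfl fun a _ => Finset.sum_congr rfl fun b _ =>
    Finset.sum_congr rfl fun c _ => Finset.sum_congr rfl fun d _ => ?_
  have h : cc C a b c d = gg4 C u a b c d + DD C u a b c d := by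
    rw [gg4_eq]; ring
  rw [h]; ring

/- ## Cross-term evaluations: gamma against DD -/

section GammaCross

variable {n : ℕ} {C : Tensor4 n} {u : Fin n → ℝ}

lemma S1γ (hC : IsGenCurv C) (hu : ηf u u = -1) (hW : WeylCompatible C u) (hn : 4 ≤ n) :
    (∑ a, ∑ b, ∑ c, ∑ d, gsgn a * gsgn b * gsgn c * gsgn d * gg4 C u a b c d
      * (vl u a * vl u d * ee C u b c)) = 0 := by
  refine Finset.sum_eq_zero fun a _ => Finset.sum_eq_zero fun b _ =>
    Finset.sum_eq_zero fun c _ => ?_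
  calc (∑ d, gsgn a * gsgn b * gsgn c * gsgn d * gg4 C u a b c d
        * (vl u a * vl u d * ee C u b c))
      = (gsgn a * gsgn b * gsgn c * vl u a * ee C u b c)
          * ∑ d, u d * gg4 C u a b c d := by
        rw [Finset.mul_sum]
        refine Finset.sum_congr rfl fun d _ => ?_
        unfold vl
        linear_combination (gsgn a * gsgn b * gsgn c * (gsgn a * u a) * ee C u b c
          * (u d * gg4 C u a b c d)) * gsgn_sq d
    _ = 0 := by rw [uγ4 hC hu hW hn a b c, mul_zero]

lemma S2γ (hC : IsGenCurv C) (hu : ηf u u = -1) (hW : WeylCompatible C u) (hn : 4 ≤ n) :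
    (∑ a, ∑ b, ∑ c, ∑ d, gsgn a * gsgn b * gsgn c * gsgn d * gg4 C u a b c d
      * (vl u b * vl u d * ee C u a c)) = 0 := by
  refine Finset.sum_eq_zero fun a _ => Finset.sum_eq_zero fun b _ =>
    Finset.sum_eq_zero fun c _ => ?_
  calc (∑ d, gsgn a * gsgn b * gsgn c * gsgn d * gg4 C u a b c d
        * (vl u b * vl u d * ee C u a c))
      = (gsgn a * gsgn b * gsgn c * vl u b * ee C u a c)
          * ∑ d, u d * gg4 C u a b c d := by
        rw [Finset.mul_sum]
        refine Finset.sum_congr rfl fun d _ => ?_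
        unfold vl
        linear_combination (gsgn a * gsgn b * gsgn c * (gsgn b * u b) * ee C u a c
          * (u d * gg4 C u a b c d)) * gsgn_sq d
    _ = 0 := by rw [uγ4 hC hu hW hn a b c, mul_zero]

lemma S3γ (hC : IsGenCurv C) (hu : ηf u u = -1) (hW : WeylCompatible C u) (hn : 4 ≤ n) :
    (∑ a, ∑ b, ∑ c, ∑ d, gsgn a * gsgn b * gsgn c * gsgn d * gg4 C u a b c d
      * (vl u a * vl u c * ee C u b d)) = 0 := by
  refine Finset.sum_eq_zero fun a _ => Finset.sum_eq_zero fun b _ => ?_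
  rw [Finset.sum_comm]
  refine Finset.sum_eq_zero fun d _ => ?_
  calc (∑ c, gsgn a * gsgn b * gsgn c * gsgn d * gg4 C u a b c d
        * (vl u a * vl u c * ee C u b d))
      = (gsgn a * gsgn b * gsgn d * vl u a * ee C u b d)
          * ∑ c, u c * gg4 C u a b c d := by
        rw [Finset.mul_sum]
        refine Finset.sum_congr rfl fun c _ => ?_
        unfold vl
        linear_combination (gsgn a * gsgn b * gsgn d * (gsgn a * u a) * ee C u b d
          * (u c * gg4 C u a b c d)) * gsgn_sq c
    _ = 0 := by rw [uγ3 hC hu hW hn a b d, mul_zero]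

lemma S4γ (hC : IsGenCurv C) (hu : ηf u u = -1) (hW : WeylCompatible C u) (hn : 4 ≤ n) :
    (∑ a, ∑ b, ∑ c, ∑ d, gsgn a * gsgn b * gsgn c * gsgn d * gg4 C u a b c d
      * (vl u b * vl u c * ee C u a d)) = 0 := by
  refine Finset.sum_eq_zero fun a _ => Finset.sum_eq_zero fun b _ => ?_
  rw [Finset.sum_comm]
  refine Finset.sum_eq_zero fun d _ => ?_
  calc (∑ c, gsgn a * gsgn b * gsgn c * gsgn d * gg4 C u a b c d
        * (vl u b * vl u c * ee C u a d))
      = (gsgn a * gsgn b * gsgn d * vl u b * ee C u a d)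
          * ∑ c, u c * gg4 C u a b c d := by
        rw [Finset.mul_sum]
        refine Finset.sum_congr rfl fun c _ => ?_
        unfold vl
        linear_combination (gsgn a * gsgn b * gsgn d * (gsgn b * u b) * ee C u a d
          * (u c * gg4 C u a b c d)) * gsgn_sq c
    _ = 0 := by rw [uγ3 hC hu hW hn a b d, mul_zero]

lemma T1γ (hC : IsGenCurv C) (htr : TotallyTraceless C) (hu : ηf u u = -1) (hn : 4 ≤ n) :
    (∑ a, ∑ b, ∑ c, ∑ d, gsgn a * gsgn b * gsgn c * gsgn d * gg4 C u a b c d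
      * (ηm a d * ee C u b c)) = 0 := by
  have h1 : (∑ a, ∑ b, ∑ c, ∑ d, gsgn a * gsgn b * gsgn c * gsgn d * gg4 C u a b c d
      * (ηm a d * ee C u b c))
      = ∑ a, ∑ b, ∑ c, gsgn a * gsgn b * gsgn c * ee C u b c * gg4 C u a b c a := by
    refine Finset.sum_congr rfl fun a _ => Finset.sum_congr rfl fun b _ =>
      Finset.sum_congr rfl fun c _ => ?_
    calc (∑ d, gsgn a * gsgn b * gsgn c * gsgn d * gg4 C u a b c d
          * (ηm a d * ee C u b c))
        = (gsgn a * gsgn b * gsgn c * ee C u b c)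
            * ∑ d, gsgn d * (ηm a d * gg4 C u a b c d) := by
          rw [Finset.mul_sum]
          exact Finset.sum_congr rfl fun d _ => by ring
      _ = _ := by rw [sum_g_ηm a (fun d => gg4 C u a b c d)]
  rw [h1, Finset.sum_comm]
  refine Finset.sum_eq_zero fun b _ => ?_
  rw [Finset.sum_comm]
  refine Finset.sum_eq_zero fun c _ => ?_
  calc (∑ a, gsgn a * gsgn b * gsgn c * ee C u b c * gg4 C u a b c a)
      = (gsgn b * gsgn c * ee C u b c) * ∑ a, gsgn a * gg4 C u a b c a := by
        rw [Finset.mul_sum]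
        exact Finset.sum_congr rfl fun a _ => by ring
    _ = 0 := by rw [trγ14 hC htr hu hn b c, mul_zero]

lemma T2γ (hC : IsGenCurv C) (htr : TotallyTraceless C) (hu : ηf u u = -1) (hn : 4 ≤ n) :
    (∑ a, ∑ b, ∑ c, ∑ d, gsgn a * gsgn b * gsgn c * gsgn d * gg4 C u a b c d
      * (ηm b d * ee C u a c)) = 0 := by
  have h1 : (∑ a, ∑ b, ∑ c, ∑ d, gsgn a * gsgn b * gsgn c * gsgn d * gg4 C u a b c d
      * (ηm b d * ee C u a c))
      = ∑ a, ∑ b, ∑ c, gsgn a * gsgn b * gsgn c * ee C u a c * gg4 C u a b c b := by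
    refine Finset.sum_congr rfl fun a _ => Finset.sum_congr rfl fun b _ =>
      Finset.sum_congr rfl fun c _ => ?_
    calc (∑ d, gsgn a * gsgn b * gsgn c * gsgn d * gg4 C u a b c d
          * (ηm b d * ee C u a c))
        = (gsgn a * gsgn b * gsgn c * ee C u a c)
            * ∑ d, gsgn d * (ηm b d * gg4 C u a b c d) := by
          rw [Finset.mul_sum]
          exact Finset.sum_congr rfl fun d _ => by ring
      _ = _ := by rw [sum_g_ηm b (fun d => gg4 C u a b c d)]
  rw [h1]
  refine Finset.sum_eq_zero fun a _ => ?_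
  rw [Finset.sum_comm]
  refine Finset.sum_eq_zero fun c _ => ?_
  calc (∑ b, gsgn a * gsgn b * gsgn c * ee C u a c * gg4 C u a b c b)
      = (gsgn a * gsgn c * ee C u a c) * ∑ b, gsgn b * gg4 C u a b c b := by
        rw [Finset.mul_sum]
        exact Finset.sum_congr rfl fun b _ => by ring
    _ = 0 := by rw [trγ24 hC htr hu hn a c, mul_zero]

lemma T3γ (hC : IsGenCurv C) (htr : TotallyTraceless C) (hu : ηf u u = -1) (hn : 4 ≤ n) :
    (∑ a, ∑ b, ∑ c, ∑ d, gsgn a * gsgn b * gsgn c * gsgn d * gg4 C u a b c d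
      * (ηm a c * ee C u b d)) = 0 := by
  have h1 : (∑ a, ∑ b, ∑ c, ∑ d, gsgn a * gsgn b * gsgn c * gsgn d * gg4 C u a b c d
      * (ηm a c * ee C u b d))
      = ∑ a, ∑ b, ∑ d, gsgn a * gsgn b * gsgn d * ee C u b d * gg4 C u a b a d := by
    refine Finset.sum_congr rfl fun a _ => Finset.sum_congr rfl fun b _ => ?_
    rw [Finset.sum_comm]
    refine Finset.sum_congr rfl fun d _ => ?_
    calc (∑ c, gsgn a * gsgn b * gsgn c * gsgn d * gg4 C u a b c d
          * (ηm a c * ee C u b d))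
        = (gsgn a * gsgn b * gsgn d * ee C u b d)
            * ∑ c, gsgn c * (ηm a c * gg4 C u a b c d) := by
          rw [Finset.mul_sum]
          exact Finset.sum_congr rfl fun c _ => by ring
      _ = _ := by rw [sum_g_ηm a (fun c => gg4 C u a b c d)]
  rw [h1, Finset.sum_comm]
  refine Finset.sum_eq_zero fun b _ => ?_
  rw [Finset.sum_comm]
  refine Finset.sum_eq_zero fun d _ => ?_
  calc (∑ a, gsgn a * gsgn b * gsgn d * ee C u b d * gg4 C u a b a d)
      = (gsgn b * gsgn d * ee C u b d) * ∑ a, gsgn a * gg4 C u a b a d := by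
        rw [Finset.mul_sum]
        exact Finset.sum_congr rfl fun a _ => by ring
    _ = 0 := by rw [trγ13 hC htr hu hn b d, mul_zero]

lemma T4γ (hC : IsGenCurv C) (htr : TotallyTraceless C) (hu : ηf u u = -1) (hn : 4 ≤ n) :
    (∑ a, ∑ b, ∑ c, ∑ d, gsgn a * gsgn b * gsgn c * gsgn d * gg4 C u a b c d
      * (ηm b c * ee C u a d)) = 0 := by
  have h1 : (∑ a, ∑ b, ∑ c, ∑ d, gsgn a * gsgn b * gsgn c * gsgn d * gg4 C u a b c d
      * (ηm b c * ee C u a d))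
      = ∑ a, ∑ b, ∑ d, gsgn a * gsgn b * gsgn d * ee C u a d * gg4 C u a b b d := by
    refine Finset.sum_congr rfl fun a _ => Finset.sum_congr rfl fun b _ => ?_
    rw [Finset.sum_comm]
    refine Finset.sum_congr rfl fun d _ => ?_
    calc (∑ c, gsgn a * gsgn b * gsgn c * gsgn d * gg4 C u a b c d
          * (ηm b c * ee C u a d))
        = (gsgn a * gsgn b * gsgn d * ee C u a d)
            * ∑ c, gsgn c * (ηm b c * gg4 C u a b c d) := by
          rw [Finset.mul_sum]
          exact Finset.sum_congr rfl fun c _ => by ring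
      _ = _ := by rw [sum_g_ηm b (fun c => gg4 C u a b c d)]
  rw [h1]
  refine Finset.sum_eq_zero fun a _ => ?_
  rw [Finset.sum_comm]
  refine Finset.sum_eq_zero fun d _ => ?_
  calc (∑ b, gsgn a * gsgn b * gsgn d * ee C u a d * gg4 C u a b b d)
      = (gsgn a * gsgn d * ee C u a d) * ∑ b, gsgn b * gg4 C u a b b d := by
        rw [Finset.mul_sum]
        exact Finset.sum_congr rfl fun b _ => by ring
    _ = 0 := by rw [trγ23 hC htr hu hn a d, mul_zero]

lemma ip4_γD (hC : IsGenCurv C) (htr : TotallyTraceless C) (hu : ηf u u = -1)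
    (hW : WeylCompatible C u) (hn : 4 ≤ n) :
    ip4 (gg4 C u) (DD C u) = 0 := by
  have hsplit : ip4 (gg4 C u) (DD C u)
      = KK n * ((∑ a, ∑ b, ∑ c, ∑ d, gsgn a * gsgn b * gsgn c * gsgn d * gg4 C u a b c d
            * (vl u a * vl u d * ee C u b c))
          - (∑ a, ∑ b, ∑ c, ∑ d, gsgn a * gsgn b * gsgn c * gsgn d * gg4 C u a b c d
            * (vl u b * vl u d * ee C u a c))
          - (∑ a, ∑ b, ∑ c, ∑ d, gsgn a * gsgn b * gsgn c * gsgn d * gg4 C u a b c d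
            * (vl u a * vl u c * ee C u b d))
          + (∑ a, ∑ b, ∑ c, ∑ d, gsgn a * gsgn b * gsgn c * gsgn d * gg4 C u a b c d
            * (vl u b * vl u c * ee C u a d)))
        + mmc n * ((∑ a, ∑ b, ∑ c, ∑ d, gsgn a * gsgn b * gsgn c * gsgn d * gg4 C u a b c d
            * (ηm a d * ee C u b c))
          - (∑ a, ∑ b, ∑ c, ∑ d, gsgn a * gsgn b * gsgn c * gsgn d * gg4 C u a b c d
            * (ηm b d * ee C u a c))
          - (∑ a, ∑ b, ∑ c, ∑ d, gsgn a * gsgn b * gsgn c * gsgn d * gg4 C u a b c d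
            * (ηm a c * ee C u b d))
          + (∑ a, ∑ b, ∑ c, ∑ d, gsgn a * gsgn b * gsgn c * gsgn d * gg4 C u a b c d
            * (ηm b c * ee C u a d))) := by
    unfold ip4
    simp only [Finset.mul_sum, ← Finset.sum_sub_distrib, ← Finset.sum_add_distrib]
    refine Finset.sum_congr rfl fun a _ => Finset.sum_congr rfl fun b _ =>
      Finset.sum_congr rfl fun c _ => Finset.sum_congr rfl fun d _ => ?_
    unfold DD; ring
  rw [hsplit, S1γ hC hu hW hn, S2γ hC hu hW hn, S3γ hC hu hW hn, S4γ hC hu hW hn,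
    T1γ hC htr hu hn, T2γ hC htr hu hn, T3γ hC htr hu hn, T4γ hC htr hu hn]
  ring

end GammaCross

/- ## Cross-term evaluations: cc against DD -/

section CCCross

variable {n : ℕ} {C : Tensor4 n} {u : Fin n → ℝ}

lemma trc13c (htr : TotallyTraceless C) (b c : Fin n) :
    ∑ a, gsgn a * cc C a b a c = 0 := by
  have h := trc htr (stdb b) (stdb c)
  simpa [cc] using h

lemma trc14c (hC : IsGenCurv C) (htr : TotallyTraceless C) (b c : Fin n) :
    ∑ a, gsgn a * cc C a b c a = 0 := by
  rw [Finset.sum_congr rfl fun a _ =>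
    (by rw [cc_sym2 hC]; ring : gsgn a * cc C a b c a = -(gsgn a * cc C a b a c))]
  rw [Finset.sum_neg_distrib, trc13c htr b c, neg_zero]

lemma trc24c (hC : IsGenCurv C) (htr : TotallyTraceless C) (a c : Fin n) :
    ∑ b, gsgn b * cc C a b c b = 0 := by
  rw [Finset.sum_congr rfl fun b _ =>
    (by rw [cc_sym1 hC, cc_sym2 hC b a c b]; ring :
      gsgn b * cc C a b c b = gsgn b * cc C b a b c)]
  exact trc13c htr a c

lemma trc23c (hC : IsGenCurv C) (htr : TotallyTraceless C) (a d : Fin n) :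
    ∑ b, gsgn b * cc C a b b d = 0 := by
  rw [Finset.sum_congr rfl fun b _ =>
    (by rw [cc_sym1 hC]; ring : gsgn b * cc C a b b d = -(gsgn b * cc C b a b d))]
  rw [Finset.sum_neg_distrib, trc13c htr a d, neg_zero]

lemma TA1c (hC : IsGenCurv C) :
    (∑ a, ∑ b, ∑ c, ∑ d, gsgn a * gsgn b * gsgn c * gsgn d * cc C a b c d
      * (vl u a * vl u d * ee C u b c))
    = ∑ b, ∑ c, gsgn b * gsgn c * ee C u b c * ee C u b c := by
  calc (∑ a, ∑ b, ∑ c, ∑ d, gsgn a * gsgn b * gsgn c * gsgn d * cc C a b c d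
        * (vl u a * vl u d * ee C u b c))
      = ∑ b, ∑ a, ∑ c, ∑ d, gsgn a * gsgn b * gsgn c * gsgn d * cc C a b c d
        * (vl u a * vl u d * ee C u b c) := Finset.sum_comm
    _ = ∑ b, ∑ c, ∑ a, ∑ d, gsgn a * gsgn b * gsgn c * gsgn d * cc C a b c d
        * (vl u a * vl u d * ee C u b c) := by
        exact Finset.sum_congr rfl fun b _ => Finset.sum_comm
    _ = ∑ b, ∑ c, gsgn b * gsgn c * ee C u b c * ee C u b c := by
        refine Finset.sum_congr rfl fun b _ => Finset.sum_congr rfl fun c _ => ?_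
        calc (∑ a, ∑ d, gsgn a * gsgn b * gsgn c * gsgn d * cc C a b c d
              * (vl u a * vl u d * ee C u b c))
            = (gsgn b * gsgn c * ee C u b c) * ∑ a, ∑ d, u a * u d * cc C a b c d := by
              rw [Finset.mul_sum]
              refine Finset.sum_congr rfl fun a _ => ?_
              rw [Finset.mul_sum]
              refine Finset.sum_congr rfl fun d _ => ?_
              unfold vl
              linear_combination (gsgn b * gsgn c * ee C u b c * u a * u d * cc C a b c d
                  * (gsgn d * gsgn d)) * gsgn_sq a
                + (gsgn b * gsgn c * ee C u b c * u a * u d * cc C a b c d) * gsgn_sq d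
          _ = gsgn b * gsgn c * ee C u b c * ee C u b c := by
              rw [ee_from_cc hC.1 b c]

lemma TA2c (hC : IsGenCurv C) :
    (∑ a, ∑ b, ∑ c, ∑ d, gsgn a * gsgn b * gsgn c * gsgn d * cc C a b c d
      * (vl u b * vl u d * ee C u a c))
    = -∑ a, ∑ c, gsgn a * gsgn c * ee C u a c * ee C u a c := by
  have h1 : (∑ a, ∑ b, ∑ c, ∑ d, gsgn a * gsgn b * gsgn c * gsgn d * cc C a b c d
      * (vl u b * vl u d * ee C u a c))
      = ∑ a, ∑ c, -(gsgn a * gsgn c * ee C u a c * ee C u a c) := by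
    refine Finset.sum_congr rfl fun a _ => ?_
    rw [Finset.sum_comm]
    refine Finset.sum_congr rfl fun c _ => ?_
    calc (∑ b, ∑ d, gsgn a * gsgn b * gsgn c * gsgn d * cc C a b c d
          * (vl u b * vl u d * ee C u a c))
        = (gsgn a * gsgn c * ee C u a c) * ∑ b, ∑ d, u b * u d * cc C a b c d := by
          rw [Finset.mul_sum]
          refine Finset.sum_congr rfl fun b _ => ?_
          rw [Finset.mul_sum]
          refine Finset.sum_congr rfl fun d _ => ?_
          unfold vl
          linear_combination (gsgn a * gsgn c * ee C u a c * u b * u d * cc C a b c d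
              * (gsgn d * gsgn d)) * gsgn_sq b
            + (gsgn a * gsgn c * ee C u a c * u b * u d * cc C a b c d) * gsgn_sq d
      _ = -(gsgn a * gsgn c * ee C u a c * ee C u a c) := by
          rw [ee_from_cc2 hC a c]; ring
  rw [h1]
  simp only [Finset.sum_neg_distrib]

lemma TA3c (hC : IsGenCurv C) :
    (∑ a, ∑ b, ∑ c, ∑ d, gsgn a * gsgn b * gsgn c * gsgn d * cc C a b c d
      * (vl u a * vl u c * ee C u b d))
    = -∑ b, ∑ d, gsgn b * gsgn d * ee C u b d * ee C u b d := by
  have h1 : (∑ a, ∑ b, ∑ c, ∑ d, gsgn a * gsgn b * gsgn c * gsgn d * cc C a b c d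
      * (vl u a * vl u c * ee C u b d))
      = ∑ b, ∑ d, -(gsgn b * gsgn d * ee C u b d * ee C u b d) := by
    calc (∑ a, ∑ b, ∑ c, ∑ d, gsgn a * gsgn b * gsgn c * gsgn d * cc C a b c d
          * (vl u a * vl u c * ee C u b d))
        = ∑ b, ∑ a, ∑ c, ∑ d, gsgn a * gsgn b * gsgn c * gsgn d * cc C a b c d
          * (vl u a * vl u c * ee C u b d) := Finset.sum_comm
      _ = ∑ b, ∑ a, ∑ d, ∑ c, gsgn a * gsgn b * gsgn c * gsgn d * cc C a b c d
          * (vl u a * vl u c * ee C u b d) := by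
          exact Finset.sum_congr rfl fun b _ => Finset.sum_congr rfl fun a _ =>
            Finset.sum_comm
      _ = ∑ b, ∑ d, ∑ a, ∑ c, gsgn a * gsgn b * gsgn c * gsgn d * cc C a b c d
          * (vl u a * vl u c * ee C u b d) := by
          exact Finset.sum_congr rfl fun b _ => Finset.sum_comm
      _ = ∑ b, ∑ d, -(gsgn b * gsgn d * ee C u b d * ee C u b d) := by
          refine Finset.sum_congr rfl fun b _ => Finset.sum_congr rfl fun d _ => ?_
          calc (∑ a, ∑ c, gsgn a * gsgn b * gsgn c * gsgn d * cc C a b c d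
                * (vl u a * vl u c * ee C u b d))
              = (gsgn b * gsgn d * ee C u b d) * ∑ a, ∑ c, u a * u c * cc C a b c d := by
                rw [Finset.mul_sum]
                refine Finset.sum_congr rfl fun a _ => ?_
                rw [Finset.mul_sum]
                refine Finset.sum_congr rfl fun c _ => ?_
                unfold vl
                linear_combination (gsgn b * gsgn d * ee C u b d * u a * u c * cc C a b c d
                    * (gsgn c * gsgn c)) * gsgn_sq a
                  + (gsgn b * gsgn d * ee C u b d * u a * u c * cc C a b c d) * gsgn_sq c
            _ = -(gsgn b * gsgn d * ee C u b d * ee C u b d) := by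
                rw [ee_from_cc3 hC b d]; ring
  rw [h1]
  simp only [Finset.sum_neg_distrib]

lemma TA4c (hC : IsGenCurv C) :
    (∑ a, ∑ b, ∑ c, ∑ d, gsgn a * gsgn b * gsgn c * gsgn d * cc C a b c d
      * (vl u b * vl u c * ee C u a d))
    = ∑ a, ∑ d, gsgn a * gsgn d * ee C u a d * ee C u a d := by
  calc (∑ a, ∑ b, ∑ c, ∑ d, gsgn a * gsgn b * gsgn c * gsgn d * cc C a b c d
        * (vl u b * vl u c * ee C u a d))
      = ∑ a, ∑ b, ∑ d, ∑ c, gsgn a * gsgn b * gsgn c * gsgn d * cc C a b c d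
        * (vl u b * vl u c * ee C u a d) := by
        exact Finset.sum_congr rfl fun a _ => Finset.sum_congr rfl fun b _ =>
          Finset.sum_comm
    _ = ∑ a, ∑ d, ∑ b, ∑ c, gsgn a * gsgn b * gsgn c * gsgn d * cc C a b c d
        * (vl u b * vl u c * ee C u a d) := by
        exact Finset.sum_congr rfl fun a _ => Finset.sum_comm
    _ = ∑ a, ∑ d, gsgn a * gsgn d * ee C u a d * ee C u a d := by
        refine Finset.sum_congr rfl fun a _ => Finset.sum_congr rfl fun d _ => ?_
        calc (∑ b, ∑ c, gsgn a * gsgn b * gsgn c * gsgn d * cc C a b c d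
              * (vl u b * vl u c * ee C u a d))
            = (gsgn a * gsgn d * ee C u a d) * ∑ b, ∑ c, u b * u c * cc C a b c d := by
              rw [Finset.mul_sum]
              refine Finset.sum_congr rfl fun b _ => ?_
              rw [Finset.mul_sum]
              refine Finset.sum_congr rfl fun c _ => ?_
              unfold vl
              linear_combination (gsgn a * gsgn d * ee C u a d * u b * u c * cc C a b c d
                  * (gsgn c * gsgn c)) * gsgn_sq b
                + (gsgn a * gsgn d * ee C u a d * u b * u c * cc C a b c d) * gsgn_sq c
          _ = gsgn a * gsgn d * ee C u a d * ee C u a d := by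
              rw [ee_from_cc4 hC a d]

lemma TB1c (hC : IsGenCurv C) (htr : TotallyTraceless C) :
    (∑ a, ∑ b, ∑ c, ∑ d, gsgn a * gsgn b * gsgn c * gsgn d * cc C a b c d
      * (ηm a d * ee C u b c)) = 0 := by
  have h1 : (∑ a, ∑ b, ∑ c, ∑ d, gsgn a * gsgn b * gsgn c * gsgn d * cc C a b c d
      * (ηm a d * ee C u b c))
      = ∑ a, ∑ b, ∑ c, gsgn a * gsgn b * gsgn c * ee C u b c * cc C a b c a := by
    refine Finset.sum_congr rfl fun a _ => Finset.sum_congr rfl fun b _ =>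
      Finset.sum_congr rfl fun c _ => ?_
    calc (∑ d, gsgn a * gsgn b * gsgn c * gsgn d * cc C a b c d
          * (ηm a d * ee C u b c))
        = (gsgn a * gsgn b * gsgn c * ee C u b c)
            * ∑ d, gsgn d * (ηm a d * cc C a b c d) := by
          rw [Finset.mul_sum]
          exact Finset.sum_congr rfl fun d _ => by ring
      _ = _ := by rw [sum_g_ηm a (fun d => cc C a b c d)]
  rw [h1, Finset.sum_comm]
  refine Finset.sum_eq_zero fun b _ => ?_
  rw [Finset.sum_comm]
  refine Finset.sum_eq_zero fun c _ => ?_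
  calc (∑ a, gsgn a * gsgn b * gsgn c * ee C u b c * cc C a b c a)
      = (gsgn b * gsgn c * ee C u b c) * ∑ a, gsgn a * cc C a b c a := by
        rw [Finset.mul_sum]
        exact Finset.sum_congr rfl fun a _ => by ring
    _ = 0 := by rw [trc14c hC htr b c, mul_zero]

lemma TB2c (hC : IsGenCurv C) (htr : TotallyTraceless C) :
    (∑ a, ∑ b, ∑ c, ∑ d, gsgn a * gsgn b * gsgn c * gsgn d * cc C a b c d
      * (ηm b d * ee C u a c)) = 0 := by
  have h1 : (∑ a, ∑ b, ∑ c, ∑ d, gsgn a * gsgn b * gsgn c * gsgn d * cc C a b c d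
      * (ηm b d * ee C u a c))
      = ∑ a, ∑ b, ∑ c, gsgn a * gsgn b * gsgn c * ee C u a c * cc C a b c b := by
    refine Finset.sum_congr rfl fun a _ => Finset.sum_congr rfl fun b _ =>
      Finset.sum_congr rfl fun c _ => ?_
    calc (∑ d, gsgn a * gsgn b * gsgn c * gsgn d * cc C a b c d
          * (ηm b d * ee C u a c))
        = (gsgn a * gsgn b * gsgn c * ee C u a c)
            * ∑ d, gsgn d * (ηm b d * cc C a b c d) := by
          rw [Finset.mul_sum]
          exact Finset.sum_congr rfl fun d _ => by ring
      _ = _ := by rw [sum_g_ηm b (fun d => cc C a b c d)]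
  rw [h1]
  refine Finset.sum_eq_zero fun a _ => ?_
  rw [Finset.sum_comm]
  refine Finset.sum_eq_zero fun c _ => ?_
  calc (∑ b, gsgn a * gsgn b * gsgn c * ee C u a c * cc C a b c b)
      = (gsgn a * gsgn c * ee C u a c) * ∑ b, gsgn b * cc C a b c b := by
        rw [Finset.mul_sum]
        exact Finset.sum_congr rfl fun b _ => by ring
    _ = 0 := by rw [trc24c hC htr a c, mul_zero]

lemma TB3c (hC : IsGenCurv C) (htr : TotallyTraceless C) :
    (∑ a, ∑ b, ∑ c, ∑ d, gsgn a * gsgn b * gsgn c * gsgn d * cc C a b c d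
      * (ηm a c * ee C u b d)) = 0 := by
  have h1 : (∑ a, ∑ b, ∑ c, ∑ d, gsgn a * gsgn b * gsgn c * gsgn d * cc C a b c d
      * (ηm a c * ee C u b d))
      = ∑ a, ∑ b, ∑ d, gsgn a * gsgn b * gsgn d * ee C u b d * cc C a b a d := by
    refine Finset.sum_congr rfl fun a _ => Finset.sum_congr rfl fun b _ => ?_
    rw [Finset.sum_comm]
    refine Finset.sum_congr rfl fun d _ => ?_
    calc (∑ c, gsgn a * gsgn b * gsgn c * gsgn d * cc C a b c d
          * (ηm a c * ee C u b d))
        = (gsgn a * gsgn b * gsgn d * ee C u b d)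
            * ∑ c, gsgn c * (ηm a c * cc C a b c d) := by
          rw [Finset.mul_sum]
          exact Finset.sum_congr rfl fun c _ => by ring
      _ = _ := by rw [sum_g_ηm a (fun c => cc C a b c d)]
  rw [h1, Finset.sum_comm]
  refine Finset.sum_eq_zero fun b _ => ?_
  rw [Finset.sum_comm]
  refine Finset.sum_eq_zero fun d _ => ?_
  calc (∑ a, gsgn a * gsgn b * gsgn d * ee C u b d * cc C a b a d)
      = (gsgn b * gsgn d * ee C u b d) * ∑ a, gsgn a * cc C a b a d := by
        rw [Finset.mul_sum]
        exact Finset.sum_congr rfl fun a _ => by ring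
    _ = 0 := by rw [trc13c htr b d, mul_zero]

lemma TB4c (hC : IsGenCurv C) (htr : TotallyTraceless C) :
    (∑ a, ∑ b, ∑ c, ∑ d, gsgn a * gsgn b * gsgn c * gsgn d * cc C a b c d
      * (ηm b c * ee C u a d)) = 0 := by
  have h1 : (∑ a, ∑ b, ∑ c, ∑ d, gsgn a * gsgn b * gsgn c * gsgn d * cc C a b c d
      * (ηm b c * ee C u a d))
      = ∑ a, ∑ b, ∑ d, gsgn a * gsgn b * gsgn d * ee C u a d * cc C a b b d := by
    refine Finset.sum_congr rfl fun a _ => Finset.sum_congr rfl fun b _ => ?_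
    rw [Finset.sum_comm]
    refine Finset.sum_congr rfl fun d _ => ?_
    calc (∑ c, gsgn a * gsgn b * gsgn c * gsgn d * cc C a b c d
          * (ηm b c * ee C u a d))
        = (gsgn a * gsgn b * gsgn d * ee C u a d)
            * ∑ c, gsgn c * (ηm b c * cc C a b c d) := by
          rw [Finset.mul_sum]
          exact Finset.sum_congr rfl fun c _ => by ring
      _ = _ := by rw [sum_g_ηm b (fun c => cc C a b c d)]
  rw [h1]
  refine Finset.sum_eq_zero fun a _ => ?_
  rw [Finset.sum_comm]
  refine Finset.sum_eq_zero fun d _ => ?_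
  calc (∑ b, gsgn a * gsgn b * gsgn d * ee C u a d * cc C a b b d)
      = (gsgn a * gsgn d * ee C u a d) * ∑ b, gsgn b * cc C a b b d := by
        rw [Finset.mul_sum]
        exact Finset.sum_congr rfl fun b _ => by ring
    _ = 0 := by rw [trc23c hC htr a d, mul_zero]

lemma ip4_cD (hC : IsGenCurv C) (htr : TotallyTraceless C) :
    ip4 (cc C) (DD C u) = 4 * KK n * ip2 (ee C u) (ee C u) := by
  have hsplit : ip4 (cc C) (DD C u)
      = KK n * ((∑ a, ∑ b, ∑ c, ∑ d, gsgn a * gsgn b * gsgn c * gsgn d * cc C a b c d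
            * (vl u a * vl u d * ee C u b c))
          - (∑ a, ∑ b, ∑ c, ∑ d, gsgn a * gsgn b * gsgn c * gsgn d * cc C a b c d
            * (vl u b * vl u d * ee C u a c))
          - (∑ a, ∑ b, ∑ c, ∑ d, gsgn a * gsgn b * gsgn c * gsgn d * cc C a b c d
            * (vl u a * vl u c * ee C u b d))
          + (∑ a, ∑ b, ∑ c, ∑ d, gsgn a * gsgn b * gsgn c * gsgn d * cc C a b c d
            * (vl u b * vl u c * ee C u a d)))
        + mmc n * ((∑ a, ∑ b, ∑ c, ∑ d, gsgn a * gsgn b * gsgn c * gsgn d * cc C a b c d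
            * (ηm a d * ee C u b c))
          - (∑ a, ∑ b, ∑ c, ∑ d, gsgn a * gsgn b * gsgn c * gsgn d * cc C a b c d
            * (ηm b d * ee C u a c))
          - (∑ a, ∑ b, ∑ c, ∑ d, gsgn a * gsgn b * gsgn c * gsgn d * cc C a b c d
            * (ηm a c * ee C u b d))
          + (∑ a, ∑ b, ∑ c, ∑ d, gsgn a * gsgn b * gsgn c * gsgn d * cc C a b c d
            * (ηm b c * ee C u a d))) := by
    unfold ip4
    simp only [Finset.mul_sum, ← Finset.sum_sub_distrib, ← Finset.sum_add_distrib]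
    refine Finset.sum_congr rfl fun a _ => Finset.sum_congr rfl fun b _ =>
      Finset.sum_congr rfl fun c _ => Finset.sum_congr rfl fun d _ => ?_
    unfold DD; ring
  rw [hsplit, TA1c hC, TA2c hC, TA3c hC, TA4c hC,
    TB1c hC htr, TB2c hC htr, TB3c hC htr, TB4c hC htr]
  unfold ip2
  ring

end CCCross

/- ## Part 1 assembled -/

section Part1

variable {n : ℕ} {C : Tensor4 n} {u : Fin n → ℝ}

lemma ip4_DDDD : ip4 (DD C u) (DD C u)
    = ip4 (cc C) (DD C u) - ip4 (gg4 C u) (DD C u) := by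
  unfold ip4
  simp only [← Finset.sum_sub_distrib]
  refine Finset.sum_congr rfl fun a _ => Finset.sum_congr rfl fun b _ =>
    Finset.sum_congr rfl fun c _ => Finset.sum_congr rfl fun d _ => ?_
  rw [gg4_eq]; ring

lemma part1 (hn : 4 ≤ n) (hC : IsGenCurv C) (htr : TotallyTraceless C)
    (hu : ηf u u = -1) (hW : WeylCompatible C u) :
    sq4 C = 4 * (((n : ℝ) - 2) / ((n : ℝ) - 3)) * sq2 (electric C u) + sq4 (Γt C u) := by
  have h1 : sq4 C = ip4 (cc C) (cc C) := by rw [sq4_diag]; rfl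
  have h2 : sq4 (Γt C u) = ip4 (gg4 C u) (gg4 C u) := by rw [sq4_diag]; rfl
  have h3 : sq2 (electric C u) = ip2 (ee C u) (ee C u) := by rw [sq2_diag]; rfl
  have h4 := ip4_split C u
  have h5 := ip4_γD hC htr hu hW hn
  have h6 := ip4_cD (u := u) hC htr
  have h7 := ip4_DDDD (C := C) (u := u)
  have hK : KK n = ((n : ℝ) - 2) / ((n : ℝ) - 3) := rfl
  rw [h1, h2, h3, ← hK]
  rw [h4, h5, h7, h5, h6]
  ring

end Part1

/- ## Positivity: the projector matrix and its factorization -/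

section Projector

variable {n : ℕ} {u : Fin n → ℝ}

lemma quadform_nonneg (hn : 0 < n) (hu : ηf u u = -1) (x : Fin n → ℝ) :
    0 ≤ (∑ a, gsgn a * x a * x a) + (∑ a, u a * x a) ^ 2 := by
  set z : Fin n := ⟨0, hn⟩ with hz
  have hzval : ((z : Fin n) : ℕ) = 0 := rfl
  have herase : ∀ a : Fin n, a ∈ univ.erase z → gsgn a = 1 := by
    intro a ha
    have hne : a ≠ z := (Finset.mem_erase.mp ha).1
    have : (a : ℕ) ≠ 0 := fun h => hne (Fin.ext (by rw [h, hzval]))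
    simp [gsgn, this]
  have hgz : gsgn z = -1 := by simp [gsgn, hzval]
  -- decompose the three sums
  have h1 : (∑ a, gsgn a * x a * x a)
      = -(x z * x z) + ∑ a ∈ univ.erase z, x a * x a := by
    rw [← Finset.add_sum_erase univ _ (mem_univ z), hgz]
    have : ∀ a ∈ univ.erase z, gsgn a * x a * x a = x a * x a := fun a ha => by
      rw [herase a ha, one_mul]
    rw [Finset.sum_congr rfl this]; ring
  have h2 : (∑ a, u a * x a) = u z * x z + ∑ a ∈ univ.erase z, u a * x a :=
    (Finset.add_sum_erase univ _ (mem_univ z)).symm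
  have h3 : (-1 : ℝ) = -(u z * u z) + ∑ a ∈ univ.erase z, u a * u a := by
    rw [← hu, ηf_eq, ← Finset.add_sum_erase univ _ (mem_univ z), hgz]
    have : ∀ a ∈ univ.erase z, gsgn a * u a * u a = u a * u a := fun a ha => by
      rw [herase a ha, one_mul]
    rw [Finset.sum_congr rfl this]; ring
  set s : ℝ := ∑ a ∈ univ.erase z, u a * x a with hs
  set q : ℝ := ∑ a ∈ univ.erase z, x a * x a with hq
  set p : ℝ := ∑ a ∈ univ.erase z, u a * u a with hp
  have hq0 : 0 ≤ q := Finset.sum_nonneg fun a _ => mul_self_nonneg _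
  have hp0 : 0 ≤ p := Finset.sum_nonneg fun a _ => mul_self_nonneg _
  have hcs : s ^ 2 ≤ p * q := by
    have := Finset.sum_mul_sq_le_sq_mul_sq (univ.erase z) u x
    calc s ^ 2 ≤ (∑ a ∈ univ.erase z, u a ^ 2) * ∑ a ∈ univ.erase z, x a ^ 2 := this
      _ = p * q := by
          rw [hp, hq]
          congr 1 <;> exact Finset.sum_congr rfl fun a _ => (sq _)
  have hpval : p = u z * u z - 1 := by linarith
  rw [h1, h2]
  rcases eq_or_lt_of_le hp0 with hp0' | hp0'
  · -- p = 0, so s = 0 and u z ^ 2 = 1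
    have hs2 : s ^ 2 ≤ 0 := by rw [← hp0', zero_mul] at hcs; exact hcs
    have hs0 : s = 0 := by
      have h : s ^ 2 = 0 := le_antisymm hs2 (sq_nonneg s)
      exact pow_eq_zero_iff (two_ne_zero) |>.mp h
    have huz : u z * u z = 1 := by linarith
    rw [hs0]
    nlinarith [sq_nonneg (u z * x z), huz, hq0]
  · -- p > 0
    have key : p * (-(x z * x z) + q + (u z * x z + s) ^ 2)
        = (p * x z + u z * s) ^ 2 + (p * q - s ^ 2) := by
      rw [hpval]; ring
    have hE : 0 ≤ p * (-(x z * x z) + q + (u z * x z + s) ^ 2) := by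
      rw [key]
      have := sq_nonneg (p * x z + u z * s)
      linarith
    nlinarith [hE, hp0']

def Pm {n : ℕ} (u : Fin n → ℝ) : Matrix (Fin n) (Fin n) ℝ :=
  fun a b => ηm a b + u a * u b

lemma Pm_posSemidef (hn : 0 < n) (hu : ηf u u = -1) : (Pm u).PosSemidef := by
  refine Matrix.PosSemidef.of_dotProduct_mulVec_nonneg ?_ ?_
  · ext a b
    simp only [Matrix.conjTranspose_apply, Pm, star_trivial]
    rw [ηm_comm]; ring
  · intro x
    have hx : star x = x := star_trivial x
    have key : dotProduct x ((Pm u).mulVec x)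
        = (∑ a, gsgn a * x a * x a) + (∑ a, u a * x a) ^ 2 := by
      unfold dotProduct Matrix.mulVec Pm
      calc ∑ a, x a * ∑ b, (ηm a b + u a * u b) * x b
          = ∑ a, ((∑ b, ηm a b * (x a * x b)) + x a * u a * ∑ b, u b * x b) := by
            refine Finset.sum_congr rfl fun a _ => ?_
            rw [Finset.mul_sum, Finset.mul_sum, ← Finset.sum_add_distrib]
            refine Finset.sum_congr rfl fun b _ => by ring
        _ = ∑ a, (gsgn a * (x a * x a) + x a * u a * ∑ b, u b * x b) := by
            refine Finset.sum_congr rfl fun a _ => ?_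
            rw [collapse a (fun b => x a * x b)]
        _ = (∑ a, gsgn a * x a * x a) + (∑ a, u a * x a) * (∑ b, u b * x b) := by
            rw [Finset.sum_add_distrib]
            congr 1
            · exact Finset.sum_congr rfl fun a _ => by ring
            · rw [Finset.sum_mul]
              exact Finset.sum_congr rfl fun a _ => by ring
        _ = (∑ a, gsgn a * x a * x a) + (∑ a, u a * x a) ^ 2 := by ring
    rw [hx]
    simpa [key] using quadform_nonneg hn hu x

lemma Pm_factor (hn : 0 < n) (hu : ηf u u = -1) :
    ∃ B : Matrix (Fin n) (Fin n) ℝ, ∀ a b, Pm u a b = ∑ i, B i a * B i b := by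
  obtain ⟨B, hB⟩ : ∃ B : Matrix (Fin n) (Fin n) ℝ, Pm u = B.conjTranspose * B := by
    open MatrixOrder in
    obtain ⟨B, hB⟩ := CStarAlgebra.nonneg_iff_eq_star_mul_self.mp (Pm_posSemidef hn hu).nonneg
    exact ⟨B, by rw [hB, Matrix.star_eq_conjTranspose]⟩
  refine ⟨B, fun a b => ?_⟩
  have := congrFun (congrFun hB a) b
  rw [this, Matrix.mul_apply]
  exact Finset.sum_congr rfl fun i _ => by
    simp [Matrix.conjTranspose_apply, star_trivial]

end Projector

/- ## Nonnegativity of contracted squares -/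

def Pmat2 {n : ℕ} (u : Fin n → ℝ) : Matrix (Fin n × Fin n) (Fin n × Fin n) ℝ :=
  fun x y => Pm u x.1 y.1 * Pm u x.2 y.2

def Bmat2 {n : ℕ} (B : Matrix (Fin n) (Fin n) ℝ) :
    Matrix (Fin n × Fin n) (Fin n × Fin n) ℝ :=
  fun t x => B t.1 x.1 * B t.2 x.2

def vec2 {n : ℕ} (M : Fin n → Fin n → ℝ) : Fin n × Fin n → ℝ :=
  fun x => M x.1 x.2

section Nonneg2

variable {n : ℕ} {u : Fin n → ℝ}

lemma repl_generic (u : Fin n → ℝ) (y : Fin n) (F : Fin n → ℝ)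
    (h : ∑ x, u x * F x = 0) :
    ∑ x, Pm u y x * F x = ∑ x, ηm y x * F x := by
  unfold Pm
  simp only [add_mul, Finset.sum_add_distrib]
  have h2 : ∑ x, u y * u x * F x = u y * ∑ x, u x * F x := by
    rw [Finset.mul_sum]; exact Finset.sum_congr rfl fun x _ => by ring
  rw [h2, h, mul_zero, add_zero]

lemma kt2_repl (M : Fin n → Fin n → ℝ)
    (hl : ∀ b, ∑ a, u a * M a b = 0) (hr : ∀ a, ∑ b, u b * M a b = 0)
    (a b : Fin n) :
    (∑ a', Pm u a a' * (∑ b', Pm u b b' * M a' b'))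
    = ∑ a', ηm a a' * (∑ b', ηm b b' * M a' b') := by
  have step1 : ∀ a', (∑ b', Pm u b b' * M a' b') = ∑ b', ηm b b' * M a' b' :=
    fun a' => repl_generic u b (fun b' => M a' b') (hr a')
  calc (∑ a', Pm u a a' * (∑ b', Pm u b b' * M a' b'))
      = ∑ a', Pm u a a' * (∑ b', ηm b b' * M a' b') :=
        Finset.sum_congr rfl fun a' _ => by rw [step1 a']
    _ = ∑ a', ηm a a' * (∑ b', ηm b b' * M a' b') := by
        refine repl_generic u a _ ?_
        calc (∑ a', u a' * (∑ b', ηm b b' * M a' b'))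
            = ∑ a', ∑ b', u a' * (ηm b b' * M a' b') := by
              simp only [Finset.mul_sum]
          _ = ∑ b', ∑ a', u a' * (ηm b b' * M a' b') := Finset.sum_comm
          _ = 0 := by
              refine Finset.sum_eq_zero fun b' _ => ?_
              calc (∑ a', u a' * (ηm b b' * M a' b'))
                  = ηm b b' * ∑ a', u a' * M a' b' := by
                    rw [Finset.mul_sum]
                    exact Finset.sum_congr rfl fun a' _ => by ring
                _ = 0 := by rw [hl b', mul_zero]

lemma ip2_nonneg (hn : 0 < n) (hu : ηf u u = -1) (M : Fin n → Fin n → ℝ)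
    (hl : ∀ b, ∑ a, u a * M a b = 0) (hr : ∀ a, ∑ b, u b * M a b = 0) :
    0 ≤ ip2 M M := by
  obtain ⟨B, hB⟩ := Pm_factor hn hu
  have hfac : Pmat2 u = (Bmat2 B).conjTranspose * Bmat2 B := by
    ext x y
    rw [Matrix.mul_apply]
    calc Pmat2 u x y = (∑ i, B i x.1 * B i y.1) * (∑ j, B j x.2 * B j y.2) := by
          simp only [Pmat2]; rw [hB, hB]
      _ = ∑ i, ∑ j, (B i x.1 * B i y.1) * (B j x.2 * B j y.2) :=
          Finset.sum_mul_sum _ _ _ _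
      _ = ∑ t : Fin n × Fin n, (Bmat2 B).conjTranspose x t * Bmat2 B t y := by
          rw [Fintype.sum_prod_type]
          refine Finset.sum_congr rfl fun i _ => Finset.sum_congr rfl fun j _ => ?_
          simp only [Bmat2, Matrix.conjTranspose_apply, star_trivial]
          ring
  have hpsd : (Pmat2 u).PosSemidef :=
    hfac ▸ Matrix.posSemidef_conjTranspose_mul_self (Bmat2 B)
  have hquad : 0 ≤ dotProduct (vec2 M) ((Pmat2 u).mulVec (vec2 M)) := by
    simpa using hpsd.dotProduct_mulVec_nonneg (vec2 M)
  have hmv : ∀ x : Fin n × Fin n,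
      (Pmat2 u).mulVec (vec2 M) x = ∑ a', ηm x.1 a' * (∑ b', ηm x.2 b' * M a' b') := by
    intro x
    unfold Matrix.mulVec dotProduct
    calc ∑ y : Fin n × Fin n, Pmat2 u x y * vec2 M y
        = ∑ a', ∑ b', Pm u x.1 a' * Pm u x.2 b' * M a' b' := by
          rw [Fintype.sum_prod_type]
          exact Finset.sum_congr rfl fun a' _ => Finset.sum_congr rfl fun b' _ => rfl
      _ = ∑ a', Pm u x.1 a' * (∑ b', Pm u x.2 b' * M a' b') := by
          refine Finset.sum_congr rfl fun a' _ => ?_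
          rw [Finset.mul_sum]
          exact Finset.sum_congr rfl fun b' _ => by ring
      _ = ∑ a', ηm x.1 a' * (∑ b', ηm x.2 b' * M a' b') := kt2_repl M hl hr x.1 x.2
  have hdot : dotProduct (vec2 M) ((Pmat2 u).mulVec (vec2 M)) = ip2 M M := by
    unfold dotProduct
    calc ∑ x : Fin n × Fin n, vec2 M x * (Pmat2 u).mulVec (vec2 M) x
        = ∑ a, ∑ b, M a b * (∑ a', ηm a a' * (∑ b', ηm b b' * M a' b')) := by
          rw [Fintype.sum_prod_type]
          refine Finset.sum_congr rfl fun a _ => Finset.sum_congr rfl fun b _ => ?_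
          rw [hmv (a, b)]; rfl
      _ = ip2 M M := by
          unfold ip2
          refine Finset.sum_congr rfl fun a _ => Finset.sum_congr rfl fun b _ => ?_
          simp only [collapse]
          ring
  rw [← hdot]
  exact hquad

end Nonneg2

/- ## Nonnegativity for 4-tensors -/

def Pmat4 {n : ℕ} (u : Fin n → ℝ) :
    Matrix (Fin n × Fin n × Fin n × Fin n) (Fin n × Fin n × Fin n × Fin n) ℝ :=
  fun x y => Pm u x.1 y.1 * (Pm u x.2.1 y.2.1
    * (Pm u x.2.2.1 y.2.2.1 * Pm u x.2.2.2 y.2.2.2))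

def Bmat4 {n : ℕ} (B : Matrix (Fin n) (Fin n) ℝ) :
    Matrix (Fin n × Fin n × Fin n × Fin n) (Fin n × Fin n × Fin n × Fin n) ℝ :=
  fun t x => B t.1 x.1 * (B t.2.1 x.2.1 * (B t.2.2.1 x.2.2.1 * B t.2.2.2 x.2.2.2))

def vec4 {n : ℕ} (X : Fin n → Fin n → Fin n → Fin n → ℝ) :
    Fin n × Fin n × Fin n × Fin n → ℝ :=
  fun x => X x.1 x.2.1 x.2.2.1 x.2.2.2

section Nonneg4

variable {n : ℕ} {u : Fin n → ℝ}

lemma kt4_repl (X : Fin n → Fin n → Fin n → Fin n → ℝ)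
    (h1 : ∀ b c d, ∑ a, u a * X a b c d = 0)
    (h2 : ∀ a c d, ∑ b, u b * X a b c d = 0)
    (h3 : ∀ a b d, ∑ c, u c * X a b c d = 0)
    (h4 : ∀ a b c, ∑ d, u d * X a b c d = 0)
    (a b c d : Fin n) :
    (∑ a', Pm u a a' * (∑ b', Pm u b b' * (∑ c', Pm u c c'
      * (∑ d', Pm u d d' * X a' b' c' d'))))
    = ∑ a', ηm a a' * (∑ b', ηm b b' * (∑ c', ηm c c'
      * (∑ d', ηm d d' * X a' b' c' d'))) := by
  have stepD : ∀ a' b' c', (∑ d', Pm u d d' * X a' b' c' d')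
      = ∑ d', ηm d d' * X a' b' c' d' :=
    fun a' b' c' => repl_generic u d (fun d' => X a' b' c' d') (h4 a' b' c')
  have stepC : ∀ a' b', (∑ c', Pm u c c' * (∑ d', ηm d d' * X a' b' c' d'))
      = ∑ c', ηm c c' * (∑ d', ηm d d' * X a' b' c' d') := by
    intro a' b'
    refine repl_generic u c _ ?_
    calc (∑ c', u c' * (∑ d', ηm d d' * X a' b' c' d'))
        = ∑ c', ∑ d', u c' * (ηm d d' * X a' b' c' d') := by
          simp only [Finset.mul_sum]
      _ = ∑ d', ∑ c', u c' * (ηm d d' * X a' b' c' d') := Finset.sum_comm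
      _ = 0 := by
          refine Finset.sum_eq_zero fun d' _ => ?_
          calc (∑ c', u c' * (ηm d d' * X a' b' c' d'))
              = ηm d d' * ∑ c', u c' * X a' b' c' d' := by
                rw [Finset.mul_sum]
                exact Finset.sum_congr rfl fun c' _ => by ring
            _ = 0 := by rw [h3 a' b' d', mul_zero]
  have stepB : ∀ a', (∑ b', Pm u b b' * (∑ c', ηm c c'
      * (∑ d', ηm d d' * X a' b' c' d')))
      = ∑ b', ηm b b' * (∑ c', ηm c c' * (∑ d', ηm d d' * X a' b' c' d')) := by
    intro a'
    refine repl_generic u b _ ?_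
    calc (∑ b', u b' * (∑ c', ηm c c' * (∑ d', ηm d d' * X a' b' c' d')))
        = ∑ b', ∑ c', ∑ d', u b' * (ηm c c' * (ηm d d' * X a' b' c' d')) := by
          simp only [Finset.mul_sum]
      _ = ∑ c', ∑ b', ∑ d', u b' * (ηm c c' * (ηm d d' * X a' b' c' d')) :=
          Finset.sum_comm
      _ = ∑ c', ∑ d', ∑ b', u b' * (ηm c c' * (ηm d d' * X a' b' c' d')) :=
          Finset.sum_congr rfl fun c' _ => Finset.sum_comm
      _ = 0 := by
          refine Finset.sum_eq_zero fun c' _ => Finset.sum_eq_zero fun d' _ => ?_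
          calc (∑ b', u b' * (ηm c c' * (ηm d d' * X a' b' c' d')))
              = (ηm c c' * ηm d d') * ∑ b', u b' * X a' b' c' d' := by
                rw [Finset.mul_sum]
                exact Finset.sum_congr rfl fun b' _ => by ring
            _ = 0 := by rw [h2 a' c' d', mul_zero]
  have stepA : (∑ a', Pm u a a' * (∑ b', ηm b b' * (∑ c', ηm c c'
      * (∑ d', ηm d d' * X a' b' c' d'))))
      = ∑ a', ηm a a' * (∑ b', ηm b b' * (∑ c', ηm c c'
      * (∑ d', ηm d d' * X a' b' c' d'))) := by
    refine repl_generic u a _ ?_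
    calc (∑ a', u a' * (∑ b', ηm b b' * (∑ c', ηm c c'
        * (∑ d', ηm d d' * X a' b' c' d'))))
        = ∑ a', ∑ b', ∑ c', ∑ d', u a' * (ηm b b' * (ηm c c'
            * (ηm d d' * X a' b' c' d'))) := by
          simp only [Finset.mul_sum]
      _ = ∑ b', ∑ a', ∑ c', ∑ d', u a' * (ηm b b' * (ηm c c'
            * (ηm d d' * X a' b' c' d'))) := Finset.sum_comm
      _ = ∑ b', ∑ c', ∑ a', ∑ d', u a' * (ηm b b' * (ηm c c'
            * (ηm d d' * X a' b' c' d'))) :=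
          Finset.sum_congr rfl fun b' _ => Finset.sum_comm
      _ = ∑ b', ∑ c', ∑ d', ∑ a', u a' * (ηm b b' * (ηm c c'
            * (ηm d d' * X a' b' c' d'))) :=
          Finset.sum_congr rfl fun b' _ => Finset.sum_congr rfl fun c' _ =>
            Finset.sum_comm
      _ = 0 := by
          refine Finset.sum_eq_zero fun b' _ => Finset.sum_eq_zero fun c' _ =>
            Finset.sum_eq_zero fun d' _ => ?_
          calc (∑ a', u a' * (ηm b b' * (ηm c c' * (ηm d d' * X a' b' c' d'))))
              = (ηm b b' * (ηm c c' * ηm d d')) * ∑ a', u a' * X a' b' c' d' := by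
                rw [Finset.mul_sum]
                exact Finset.sum_congr rfl fun a' _ => by ring
            _ = 0 := by rw [h1 b' c' d', mul_zero]
  calc (∑ a', Pm u a a' * (∑ b', Pm u b b' * (∑ c', Pm u c c'
      * (∑ d', Pm u d d' * X a' b' c' d'))))
      = ∑ a', Pm u a a' * (∑ b', Pm u b b' * (∑ c', Pm u c c'
          * (∑ d', ηm d d' * X a' b' c' d'))) := by simp only [stepD]
    _ = ∑ a', Pm u a a' * (∑ b', Pm u b b' * (∑ c', ηm c c'
          * (∑ d', ηm d d' * X a' b' c' d'))) := by simp only [stepC]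
    _ = ∑ a', Pm u a a' * (∑ b', ηm b b' * (∑ c', ηm c c'
          * (∑ d', ηm d d' * X a' b' c' d'))) := by simp only [stepB]
    _ = _ := stepA

lemma ip4_nonneg (hn : 0 < n) (hu : ηf u u = -1)
    (X : Fin n → Fin n → Fin n → Fin n → ℝ)
    (h1 : ∀ b c d, ∑ a, u a * X a b c d = 0)
    (h2 : ∀ a c d, ∑ b, u b * X a b c d = 0)
    (h3 : ∀ a b d, ∑ c, u c * X a b c d = 0)
    (h4 : ∀ a b c, ∑ d, u d * X a b c d = 0) :
    0 ≤ ip4 X X := by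
  obtain ⟨B, hB⟩ := Pm_factor hn hu
  have hfac : Pmat4 u = (Bmat4 B).conjTranspose * Bmat4 B := by
    ext x y
    rw [Matrix.mul_apply]
    have hR : (∑ t : Fin n × Fin n × Fin n × Fin n,
        (Bmat4 B).conjTranspose x t * Bmat4 B t y)
        = ∑ i, ∑ j, ∑ k, ∑ l, ((B i x.1 * B i y.1) * ((B j x.2.1 * B j y.2.1)
            * ((B k x.2.2.1 * B k y.2.2.1) * (B l x.2.2.2 * B l y.2.2.2)))) := by
      rw [Fintype.sum_prod_type]
      refine Finset.sum_congr rfl fun i _ => ?_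
      rw [Fintype.sum_prod_type]
      refine Finset.sum_congr rfl fun j _ => ?_
      rw [Fintype.sum_prod_type]
      refine Finset.sum_congr rfl fun k _ => Finset.sum_congr rfl fun l _ => ?_
      simp only [Bmat4, Matrix.conjTranspose_apply, star_trivial]
      ring
    rw [hR]
    simp only [Pmat4]
    rw [hB, hB, hB, hB]
    simp only [Finset.sum_mul]
    simp only [Finset.mul_sum]
  have hpsd : (Pmat4 u).PosSemidef :=
    hfac ▸ Matrix.posSemidef_conjTranspose_mul_self (Bmat4 B)
  have hquad : 0 ≤ dotProduct (vec4 X) ((Pmat4 u).mulVec (vec4 X)) := by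
    simpa using hpsd.dotProduct_mulVec_nonneg (vec4 X)
  have hmv : ∀ x : Fin n × Fin n × Fin n × Fin n,
      (Pmat4 u).mulVec (vec4 X) x
      = ∑ a', ηm x.1 a' * (∑ b', ηm x.2.1 b' * (∑ c', ηm x.2.2.1 c'
          * (∑ d', ηm x.2.2.2 d' * X a' b' c' d'))) := by
    intro x
    unfold Matrix.mulVec dotProduct
    calc ∑ y : Fin n × Fin n × Fin n × Fin n, Pmat4 u x y * vec4 X y
        = ∑ a', ∑ b', ∑ c', ∑ d',
            Pm u x.1 a' * (Pm u x.2.1 b' * (Pm u x.2.2.1 c' * Pm u x.2.2.2 d'))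
              * X a' b' c' d' := by
          rw [Fintype.sum_prod_type]
          refine Finset.sum_congr rfl fun a' _ => ?_
          rw [Fintype.sum_prod_type]
          refine Finset.sum_congr rfl fun b' _ => ?_
          rw [Fintype.sum_prod_type]
          exact Finset.sum_congr rfl fun c' _ => Finset.sum_congr rfl fun d' _ => rfl
      _ = ∑ a', Pm u x.1 a' * (∑ b', Pm u x.2.1 b' * (∑ c', Pm u x.2.2.1 c'
            * (∑ d', Pm u x.2.2.2 d' * X a' b' c' d'))) := by
          refine Eq.symm ?_
          simp only [Finset.mul_sum]
          refine Finset.sum_congr rfl fun a' _ => Finset.sum_congr rfl fun b' _ =>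
            Finset.sum_congr rfl fun c' _ => Finset.sum_congr rfl fun d' _ => by ring
      _ = _ := kt4_repl X h1 h2 h3 h4 x.1 x.2.1 x.2.2.1 x.2.2.2
  have hdot : dotProduct (vec4 X) ((Pmat4 u).mulVec (vec4 X)) = ip4 X X := by
    unfold dotProduct
    calc ∑ x : Fin n × Fin n × Fin n × Fin n, vec4 X x * (Pmat4 u).mulVec (vec4 X) x
        = ∑ a, ∑ b, ∑ c, ∑ d, X a b c d
            * (∑ a', ηm a a' * (∑ b', ηm b b' * (∑ c', ηm c c'
                * (∑ d', ηm d d' * X a' b' c' d')))) := by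
          rw [Fintype.sum_prod_type]
          refine Finset.sum_congr rfl fun a _ => ?_
          rw [Fintype.sum_prod_type]
          refine Finset.sum_congr rfl fun b _ => ?_
          rw [Fintype.sum_prod_type]
          refine Finset.sum_congr rfl fun c _ => Finset.sum_congr rfl fun d _ => ?_
          rw [hmv (a, b, c, d)]
          rfl
      _ = ip4 X X := by
          unfold ip4
          refine Finset.sum_congr rfl fun a _ => Finset.sum_congr rfl fun b _ =>
            Finset.sum_congr rfl fun c _ => Finset.sum_congr rfl fun d _ => ?_
          simp only [collapse]
          ring
  rw [← hdot]
  exact hquad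

end Nonneg4

/-- for `n ≥ 4`, a totally traceless generalized curvature tensor
`C` on Minkowski `ℝ^n` Weyl compatible with a unit timelike `u`, the Weyl scalar
is nonnegative: `C² = 4·((n−2)/(n−3))·E² + Γ² ≥ 0`. -/
theorem stmt_15 {n : ℕ} (hn : 4 ≤ n) (C : Tensor4 n)
    (hC : IsGenCurv C) (htr : TotallyTraceless C)
    (u : Fin n → ℝ) (hu : ηf u u = -1) (hW : WeylCompatible C u) :
    sq4 C = 4 * (((n : ℝ) - 2) / ((n : ℝ) - 3)) * sq2 (electric C u) + sq4 (Γt C u)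
      ∧ 0 ≤ sq4 C := by
  have hmain := part1 hn hC htr hu hW
  refine ⟨hmain, ?_⟩
  have hn0 : 0 < n := by omega
  have hpos2 : 0 ≤ ip2 (ee C u) (ee C u) :=
    ip2_nonneg hn0 hu (ee C u) (sum_u_ee_l hC) (sum_u_ee_r hC)
  have hpos4 : 0 ≤ ip4 (gg4 C u) (gg4 C u) :=
    ip4_nonneg hn0 hu (gg4 C u) (uγ1 hC hu hW hn) (uγ2 hC hu hW hn)
      (uγ3 hC hu hW hn) (uγ4 hC hu hW hn)
  have h2 : sq2 (electric C u) = ip2 (ee C u) (ee C u) := by rw [sq2_diag]; rfl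
  have h4 : sq4 (Γt C u) = ip4 (gg4 C u) (gg4 C u) := by rw [sq4_diag]; rfl
  rw [hmain, h2, h4]
  have hK : (0 : ℝ) ≤ ((n : ℝ) - 2) / ((n : ℝ) - 3) := KK_pos hn
  have h42 : (0 : ℝ) ≤ 4 * (((n : ℝ) - 2) / ((n : ℝ) - 3)) * ip2 (ee C u) (ee C u) := by
    have : (0 : ℝ) ≤ 4 * (((n : ℝ) - 2) / ((n : ℝ) - 3)) := by linarith
    exact mul_nonneg this hpos2
  linarith
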